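/- arXiv:1006.4482 — 3 statements merged into one kernel-verified Lean document; each statement's English description precedes it below -/
import Mathlib

section
/- Let G, F : ℝ × ℝ → Matrix (Fin m) (Fin m) ℂ satisfy the zero curvature equation G_t - F_x + G*F - F*G = 0 on the semi-strip D = [0,∞) × [0,a), where G, G_t, F are continuous in (x,t) and F_x exists. Let W(x,t) be the solution of ∂W/∂x = G·W with W(0,t) = I, and let R(x,t) be the solution of ∂R/∂t = F·R with R(x,0) = I. Then for all (x,t) ∈ D, W(x,t)·R(0,t) = R(x,t)·W(x,0). -/
open Matrix Set

attribute [local instance] Matrix.normedAddCommGroup Matrix.normedSpace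

/-!
Both sides are compared as solutions of an ODE in `t`, which needs `∂ₜW`. By the zero
curvature equation, `V = F(·,t) W(·,t) - W(·,t) F(0,t)` solves the variational equation
`V' = Gₜ W + G V`, `V(0) = 0`, of `∂ₓW = G W` with respect to the parameter `t`. The remainder
`W(·,s) - W(·,t) - (s - t) V` solves the same linear equation up to a forcing term that is
`o(s - t)` uniformly on the compact interval `[0,x]`, so Grönwall's inequality gives `∂ₜW = V`.
Then `W(x,t) R(0,t)` and `R(x,t) W(x,0)` both solve `∂ₜΦ = F(x,t) Φ` with `Φ(0) = W(x,0)`,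
and uniqueness for linear ODEs gives the identity.
-/

open Filter Topology Function

section UniformInParameter

variable {X F : Type*} [TopologicalSpace X] [NormedAddCommGroup F] {K : Set X} {I : Set ℝ}
  {t : ℝ}

theorem IsCompact.eventually_forall_norm_sub_lt {f : X → ℝ → F} (hK : IsCompact K)
    (hf : ContinuousOn (uncurry f) (K ×ˢ I)) (ht : t ∈ I) {c : ℝ} (hc : 0 < c) :
    ∀ᶠ s in 𝓝[I] t, ∀ y ∈ K, ‖f y s - f y t‖ < c := by
  have hf' : ContinuousOn (uncurry fun s y => f y s) (I ×ˢ K) :=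
    hf.comp continuous_swap.continuousOn fun p hp => ⟨hp.2, hp.1⟩
  obtain ⟨v, hv, hvK⟩ := hK.mem_uniformity_of_prod hf' ht (Metric.dist_mem_uniformity hc)
  filter_upwards [hv] with s hs y hy
  simpa [dist_eq_norm] using hvK s hs y hy

theorem IsCompact.eventually_forall_norm_sub_sub_smul_le [NormedSpace ℝ F] {f f' : X → ℝ → F}
    (hK : IsCompact K) (hI : Convex ℝ I)
    (hf : ∀ y ∈ K, ∀ s ∈ I, HasDerivWithinAt (f y) (f' y s) I s)
    (hf' : ContinuousOn (uncurry f') (K ×ˢ I)) (ht : t ∈ I) {c : ℝ} (hc : 0 < c) :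
    ∀ᶠ s in 𝓝[I] t, ∀ y ∈ K, ‖f y s - f y t - (s - t) • f' y t‖ ≤ c * ‖s - t‖ := by
  obtain ⟨δ, hδ, hball⟩ :=
    Metric.mem_nhdsWithin_iff.1 (hK.eventually_forall_norm_sub_lt hf' ht hc)
  have hJ : Convex ℝ (Metric.ball t δ ∩ I) := (convex_ball t δ).inter hI
  filter_upwards [inter_mem_nhdsWithin I (Metric.ball_mem_nhds t hδ)] with s hs y hy
  have hmvt := hJ.norm_image_sub_le_of_norm_hasDerivWithin_le
    (f := fun σ => f y σ - σ • f' y t) (f' := fun σ => f' y σ - f' y t)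
    (fun σ hσ => (((hf y hy σ hσ.2).mono inter_subset_right).sub
        ((hasDerivWithinAt_id σ _).smul_const (f' y t))).congr_deriv (by rw [one_smul]))
    (fun σ hσ => (hball hσ y hy).le) ⟨Metric.mem_ball_self hδ, ht⟩ ⟨hs.2, hs.1⟩
  convert hmvt using 2
  simp only [sub_smul]
  abel

end UniformInParameter

section LinearODE

variable {E : Type*} [NormedAddCommGroup E] [NormedSpace ℝ E]

theorem gronwallBound_zero_left (K ε x : ℝ) :
    gronwallBound 0 K ε x = ε * gronwallBound 0 K 1 x := by
  unfold gronwallBound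
  split_ifs <;> ring

theorem norm_le_gronwallBound_of_hasDerivAt_linear {f e : ℝ → E} {A : ℝ → E →L[ℝ] E}
    {a b K ε : ℝ} (hf : ∀ y ∈ Icc a b, HasDerivAt f (A y (f y) + e y) y)
    (hA : ∀ y ∈ Icc a b, ‖A y‖ ≤ K) (he : ∀ y ∈ Icc a b, ‖e y‖ ≤ ε) :
    ∀ y ∈ Icc a b, ‖f y‖ ≤ gronwallBound ‖f a‖ K ε (y - a) := by
  refine norm_le_gronwallBound_of_norm_deriv_right_le
    (fun y hy => (hf y hy).continuousAt.continuousWithinAt)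
    (fun y hy => (hf y (Ico_subset_Icc_self hy)).hasDerivWithinAt) le_rfl fun y hy => ?_
  replace hy := Ico_subset_Icc_self hy
  calc ‖A y (f y) + e y‖ ≤ ‖A y‖ * ‖f y‖ + ε :=
        (norm_add_le _ _).trans (add_le_add ((A y).le_opNorm _) (he y hy))
    _ ≤ K * ‖f y‖ + ε := by gcongr; exact hA y hy

theorem eqOn_of_hasDerivWithinAt_linear {f g : ℝ → E} {A : ℝ → E →L[ℝ] E} {a b : ℝ}
    (hA : ContinuousOn A (Icc a b))
    (hf : ∀ s ∈ Icc a b, HasDerivWithinAt f (A s (f s)) (Icc a b) s)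
    (hg : ∀ s ∈ Icc a b, HasDerivWithinAt g (A s (g s)) (Icc a b) s) (ha : f a = g a) :
    EqOn f g (Icc a b) := by
  obtain ⟨C, hC⟩ := isCompact_Icc.exists_bound_of_continuousOn hA
  have hIci : ∀ s ∈ Ico a b, Icc a b ∈ 𝓝[≥] s := fun s hs => Icc_mem_nhdsGE_of_mem hs
  exact ODE_solution_unique_of_mem_Icc_right (K := C.toNNReal) (s := fun _ => univ)
    (fun s hs => ((A s).lipschitz.weaken (by
      rw [← NNReal.coe_le_coe, coe_nnnorm]
      exact (hC s (Ico_subset_Icc_self hs)).trans (Real.le_coe_toNNReal C))).lipschitzOnWith)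
    (fun s hs => (hf s hs).continuousWithinAt)
    (fun s hs => (hf s (Ico_subset_Icc_self hs)).mono_of_mem_nhdsWithin (hIci s hs))
    (fun _ _ => mem_univ _) (fun s hs => (hg s hs).continuousWithinAt)
    (fun s hs => (hg s (Ico_subset_Icc_self hs)).mono_of_mem_nhdsWithin (hIci s hs))
    (fun _ _ => mem_univ _) ha

end LinearODE

section ParameterDependence

variable {E : Type*} [NormedAddCommGroup E] [NormedSpace ℝ E]
  {L L' : ℝ → ℝ → E →L[ℝ] E} {W : ℝ → ℝ → E} {V : ℝ → E} {y s t : ℝ}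

theorem hasDerivAt_linear_ode_param_remainder
    (hWs : HasDerivAt (W · s) (L y s (W y s)) y) (hWt : HasDerivAt (W · t) (L y t (W y t)) y)
    (hV : HasDerivAt V (L' y t (W y t) + L y t (V y)) y) :
    HasDerivAt (fun z => W z s - W z t - (s - t) • V z)
      (L y s (W y s - W y t - (s - t) • V y) +
        ((L y s - L y t - (s - t) • L' y t) (W y t) + (s - t) • (L y s - L y t) (V y))) y := by
  refine ((hWs.sub hWt).sub (hV.const_smul (s - t))).congr_deriv ?_
  simp only [map_sub, map_smul, FunLike.coe_sub, FunLike.coe_smul, Pi.sub_apply,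
    Pi.smul_apply]
  module

theorem hasDerivWithinAt_param_of_linear_ode {I : Set ℝ} {a b : ℝ} (hab : a ≤ b)
    (hI : Convex ℝ I) (ht : t ∈ I)
    (hL : ContinuousOn (uncurry L) (Icc a b ×ˢ I))
    (hL' : ContinuousOn (uncurry L') (Icc a b ×ˢ I))
    (hLd : ∀ y ∈ Icc a b, ∀ s ∈ I, HasDerivWithinAt (L y) (L' y s) I s)
    (hW : ∀ y ∈ Icc a b, ∀ s ∈ I, HasDerivAt (W · s) (L y s (W y s)) y)
    (hWa : ∀ s ∈ I, W a s = W a t)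
    (hV : ∀ y ∈ Icc a b, HasDerivAt V (L' y t (W y t) + L y t (V y)) y) (hVa : V a = 0) :
    HasDerivWithinAt (W b) (V b) I t := by
  rw [hasDerivWithinAt_iff_isLittleO, Asymptotics.isLittleO_iff]
  intro c hc
  obtain ⟨N, hN⟩ := isCompact_Icc.exists_bound_of_continuousOn (f := (L · t))
    (hL.comp (Continuous.prodMk_left t).continuousOn fun y hy => ⟨hy, ht⟩)
  obtain ⟨M, hM⟩ := isCompact_Icc.exists_bound_of_continuousOn
    (f := fun y => ‖W y t‖ + ‖V y‖) (s := Icc a b) fun y hy =>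
      ((hW y hy t ht).continuousAt.norm.add (hV y hy).continuousAt.norm).continuousWithinAt
  set C := gronwallBound 0 (N + 1) 1 (b - a)
  set c₁ := c / ((|M| + 1) * (|C| + 1))
  have hc₁ : 0 < c₁ := by positivity
  filter_upwards [self_mem_nhdsWithin, isCompact_Icc.eventually_forall_norm_sub_lt hL ht one_pos,
    isCompact_Icc.eventually_forall_norm_sub_lt hL ht hc₁,
    isCompact_Icc.eventually_forall_norm_sub_sub_smul_le hI hLd hL' ht hc₁]
    with s hs hL_one hL_small hTaylor
  have hLs : ∀ y ∈ Icc a b, ‖L y s‖ ≤ N + 1 := fun y hy => by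
    linarith [norm_le_insert' (L y s) (L y t), hL_one y hy, hN y hy]
  have hforcing : ∀ y ∈ Icc a b,
      ‖(L y s - L y t - (s - t) • L' y t) (W y t) + (s - t) • (L y s - L y t) (V y)‖ ≤
        c₁ * (|M| + 1) * ‖s - t‖ := fun y hy => by
    have hWV : ‖W y t‖ + ‖V y‖ ≤ |M| + 1 := by
      linarith [Real.le_norm_self (‖W y t‖ + ‖V y‖), hM y hy, le_abs_self M]
    calc _ ≤ c₁ * ‖s - t‖ * ‖W y t‖ + ‖s - t‖ * (c₁ * ‖V y‖) := by
          refine (norm_add_le _ _).trans (add_le_add ?_ ?_)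
          · exact (ContinuousLinearMap.le_opNorm _ _).trans (by gcongr; exact hTaylor y hy)
          · rw [norm_smul]
            gcongr
            exact (ContinuousLinearMap.le_opNorm _ _).trans (by gcongr; exact (hL_small y hy).le)
      _ = c₁ * ‖s - t‖ * (‖W y t‖ + ‖V y‖) := by ring
      _ ≤ c₁ * (|M| + 1) * ‖s - t‖ := by rw [mul_right_comm]; gcongr
  have hgr := norm_le_gronwallBound_of_hasDerivAt_linear
    (fun y hy => hasDerivAt_linear_ode_param_remainder (hW y hy s hs) (hW y hy t ht) (hV y hy))
    hLs hforcing b ⟨hab, le_rfl⟩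
  rw [hWa s hs, hVa, smul_zero, sub_self, sub_zero, norm_zero, gronwallBound_zero_left] at hgr
  calc ‖W b s - W b t - (s - t) • V b‖ ≤ c₁ * (|M| + 1) * ‖s - t‖ * C := hgr
    _ ≤ c₁ * (|M| + 1) * ‖s - t‖ * (|C| + 1) := by gcongr; linarith [le_abs_self C]
    _ = c * ‖s - t‖ := by simp only [c₁]; field_simp

end ParameterDependence

namespace Matrix

noncomputable def mulCLM (n : Type*) [Fintype n] [DecidableEq n] :
    Matrix n n ℂ →L[ℝ] Matrix n n ℂ →L[ℝ] Matrix n n ℂ :=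
  LinearMap.toContinuousLinearMap
    (LinearMap.toContinuousLinearMap.toLinearMap ∘ₗ LinearMap.mul ℝ (Matrix n n ℂ))

end Matrix

section MatrixCalculus

variable {n : Type*} [Fintype n] [DecidableEq n] {f g : ℝ → Matrix n n ℂ}
  {f' g' : Matrix n n ℂ} {s : Set ℝ} {x : ℝ}

theorem HasDerivWithinAt.matrix_mul (hf : HasDerivWithinAt f f' s x)
    (hg : HasDerivWithinAt g g' s x) :
    HasDerivWithinAt (fun y => f y * g y) (f' * g x + f x * g') s x := by
  rw [add_comm]
  exact (Matrix.mulCLM n).hasDerivWithinAt_of_bilinear hf hg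

theorem HasDerivAt.matrix_mul (hf : HasDerivAt f f' x) (hg : HasDerivAt g g' x) :
    HasDerivAt (fun y => f y * g y) (f' * g x + f x * g') x :=
  hasDerivWithinAt_univ.mp (hf.hasDerivWithinAt.matrix_mul hg.hasDerivWithinAt)

end MatrixCalculus

theorem HasDerivAt.mul_sub_mul_const_of_zeroCurvature {n : Type*} [Fintype n] [DecidableEq n]
    {f w : ℝ → Matrix n n ℂ} {f' g g' : Matrix n n ℂ} {y : ℝ} (c : Matrix n n ℂ)
    (hf : HasDerivAt f f' y) (hw : HasDerivAt w (g * w y) y)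
    (hzc : g' - f' + (g * f y - f y * g) = 0) :
    HasDerivAt (fun z => f z * w z - w z * c) (g' * w y + g * (f y * w y - w y * c)) y := by
  have hf' : f' = g' + (g * f y - f y * g) :=
    calc f' = f' + (g' - f' + (g * f y - f y * g)) := by rw [hzc, add_zero]
      _ = g' + (g * f y - f y * g) := by abel
  refine ((hf.matrix_mul hw).sub (hw.matrix_mul (hasDerivAt_const y c))).congr_deriv ?_
  rw [hf']
  noncomm_ring

theorem hasDerivWithinAt_of_zeroCurvature {m : ℕ}
    {G F Gt Fx W : ℝ → ℝ → Matrix (Fin m) (Fin m) ℂ} {D : Set (ℝ × ℝ)} {x T : ℝ} (hx : 0 ≤ x)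
    (hQ : Icc 0 x ×ˢ Icc 0 T ⊆ D)
    (hGc : ContinuousOn (fun p : ℝ × ℝ => G p.1 p.2) D)
    (hGtc : ContinuousOn (fun p : ℝ × ℝ => Gt p.1 p.2) D)
    (hGt : ∀ x t, (x, t) ∈ D → HasDerivAt (fun s => G x s) (Gt x t) t)
    (hFx : ∀ x t, (x, t) ∈ D → HasDerivAt (fun y => F y t) (Fx x t) x)
    (hzc : ∀ x t, (x, t) ∈ D → Gt x t - Fx x t + (G x t * F x t - F x t * G x t) = 0)
    (hW : ∀ x t, (x, t) ∈ D → HasDerivAt (fun y => W y t) (G x t * W x t) x)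
    (hW0 : ∀ s ∈ Icc 0 T, W 0 s = 1) :
    ∀ t ∈ Icc 0 T, HasDerivWithinAt (W x) (F x t * W x t - W x t * F 0 t) (Icc 0 T) t := by
  intro t ht
  have hmem : ∀ y ∈ Icc 0 x, ∀ s ∈ Icc 0 T, (y, s) ∈ D := fun y hy s hs => hQ ⟨hy, hs⟩
  exact hasDerivWithinAt_param_of_linear_ode (L := fun y s => Matrix.mulCLM _ (G y s))
    (L' := fun y s => Matrix.mulCLM _ (Gt y s)) hx (convex_Icc 0 T) ht
    ((Matrix.mulCLM _).continuous.comp_continuousOn (hGc.mono hQ))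
    ((Matrix.mulCLM _).continuous.comp_continuousOn (hGtc.mono hQ))
    (fun y hy s hs => (Matrix.mulCLM _).hasFDerivAt.comp_hasDerivWithinAt s
      (hGt y s (hmem y hy s hs)).hasDerivWithinAt)
    (fun y hy s hs => hW y s (hmem y hy s hs))
    (fun s hs => by rw [hW0 s hs, hW0 t ht])
    (fun y hy => (hFx y t (hmem y hy t ht)).mul_sub_mul_const_of_zeroCurvature _
      (hW y t (hmem y hy t ht)) (hzc y t (hmem y hy t ht)))
    (by rw [hW0 t ht, mul_one, one_mul, sub_self])
theorem factorization_of_wave_functions_general (m : ℕ) (a : ℝ)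
    (G F Gt Fx W R : ℝ → ℝ → Matrix (Fin m) (Fin m) ℂ)
    (D : Set (ℝ × ℝ)) (hD : D = Set.Ici (0:ℝ) ×ˢ Set.Ico (0:ℝ) a)
    -- continuity of G, G_t and F on D
    (hGc : ContinuousOn (fun p : ℝ × ℝ => G p.1 p.2) D)
    (hGtc : ContinuousOn (fun p : ℝ × ℝ => Gt p.1 p.2) D)
    (hFc : ContinuousOn (fun p : ℝ × ℝ => F p.1 p.2) D)
    -- existence of the derivatives G_t and F_x on D
    (hGt : ∀ x t, (x, t) ∈ D → HasDerivAt (fun s => G x s) (Gt x t) t)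
    (hFx : ∀ x t, (x, t) ∈ D → HasDerivAt (fun y => F y t) (Fx x t) x)
    -- zero curvature equation G_t - F_x + [G, F] = 0 on D
    (hzc : ∀ x t, (x, t) ∈ D →
      Gt x t - Fx x t + (G x t * F x t - F x t * G x t) = 0)
    -- W solves ∂W/∂x = G W, W(0,t) = I
    (hW : ∀ x t, (x, t) ∈ D → HasDerivAt (fun y => W y t) (G x t * W x t) x)
    (hW0 : ∀ t, 0 ≤ t → t < a → W 0 t = 1)
    -- R solves ∂R/∂t = F R, R(x,0) = I
    (hR : ∀ x t, (x, t) ∈ D → HasDerivAt (fun s => R x s) (F x t * R x t) t)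
    (hR0 : ∀ x, 0 ≤ x → R x 0 = 1) :
    ∀ x t, (x, t) ∈ D → W x t * R 0 t = R x t * W x 0 := by
  subst hD
  rintro x t ⟨hx, ht0, hta⟩
  have hmem : ∀ y, 0 ≤ y → ∀ s ∈ Icc 0 t, (y, s) ∈ Ici (0 : ℝ) ×ˢ Ico 0 a :=
    fun y hy s hs => ⟨hy, hs.1, hs.2.trans_lt hta⟩
  have hWt := hasDerivWithinAt_of_zeroCurvature (T := t) hx (fun p hp => hmem _ hp.1.1 _ hp.2)
    hGc hGtc hGt hFx hzc hW fun s hs => hW0 s hs.1 (hs.2.trans_lt hta)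
  have hR' : ∀ y, 0 ≤ y → ∀ s ∈ Icc 0 t,
      HasDerivWithinAt (R y) (F y s * R y s) (Icc 0 t) s :=
    fun y hy s hs => (hR y s (hmem y hy s hs)).hasDerivWithinAt
  refine eqOn_of_hasDerivWithinAt_linear (A := fun s => Matrix.mulCLM _ (F x s))
    ((Matrix.mulCLM _).continuous.comp_continuousOn
      (hFc.comp (Continuous.prodMk_right x).continuousOn fun s hs => hmem x hx s hs))
    (fun s hs => ((hWt s hs).matrix_mul (hR' 0 le_rfl s hs)).congr_deriv
      (by noncomm_ring : _ = F x s * (W x s * R 0 s)))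
    (fun s hs => ((hR' x hx s hs).matrix_mul (hasDerivWithinAt_const s _ (W x 0))).congr_deriv
      (by rw [mul_zero, add_zero, mul_assoc] : _ = F x s * (R x s * W x 0)))
    (by rw [hR0 0 le_rfl, hR0 x hx, mul_one, one_mul]) ⟨ht0, le_rfl⟩

/-- Theorem 1.1 (factorization formula for wave functions): under the zero curvature
equation on the semi-strip `D = [0,∞) × [0,a)`, the fundamental solutions satisfy
`W(x,t) R(0,t) = R(x,t) W(x,0)`. -/
theorem factorization_of_wave_functions (m : ℕ) (a : ℝ) (ha : 0 < a)
    (G F Gt Fx W R : ℝ → ℝ → Matrix (Fin m) (Fin m) ℂ)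
    (D : Set (ℝ × ℝ)) (hD : D = Set.Ici (0:ℝ) ×ˢ Set.Ico (0:ℝ) a)
    -- continuity of G, G_t and F on D
    (hGc : ContinuousOn (fun p : ℝ × ℝ => G p.1 p.2) D)
    (hGtc : ContinuousOn (fun p : ℝ × ℝ => Gt p.1 p.2) D)
    (hFc : ContinuousOn (fun p : ℝ × ℝ => F p.1 p.2) D)
    -- existence of the derivatives G_t and F_x on D
    (hGt : ∀ x t, (x, t) ∈ D → HasDerivAt (fun s => G x s) (Gt x t) t)
    (hFx : ∀ x t, (x, t) ∈ D → HasDerivAt (fun y => F y t) (Fx x t) x)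
    -- zero curvature equation G_t - F_x + [G, F] = 0 on D
    (hzc : ∀ x t, (x, t) ∈ D →
      Gt x t - Fx x t + (G x t * F x t - F x t * G x t) = 0)
    -- W solves ∂W/∂x = G W, W(0,t) = I
    (hW : ∀ x t, (x, t) ∈ D → HasDerivAt (fun y => W y t) (G x t * W x t) x)
    (hW0 : ∀ t, 0 ≤ t → t < a → W 0 t = 1)
    -- R solves ∂R/∂t = F R, R(x,0) = I
    (hR : ∀ x t, (x, t) ∈ D → HasDerivAt (fun s => R x s) (F x t * R x t) t)
    (hR0 : ∀ x, 0 ≤ x → R x 0 = 1) :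
    ∀ x t, (x, t) ∈ D → W x t * R 0 t = R x t * W x 0 :=
  factorization_of_wave_functions_general m a G F Gt Fx W R D hD hGc hGtc hFc hGt hFx hzc hW hW0 hR
    hR0
end

section
/- Let j be an m × m Hermitian involution and F : ℝ → Matrix (Fin m) (Fin m) ℂ continuous with F(t)*·j + j·F(t) ≤ 0 (i.e. -(F(t)*j + jF(t)) is positive semidefinite) for all t ≥ 0. Let R solve dR/dt = F·R, R(0) = I. Then R(t)*·j·R(t) ≤ j for all t ≥ 0, i.e. j - R(t)* j R(t) is positive semidefinite. -/
/-!
The Hermitian form `Q t = (R t)ᴴ * j * R t` has derivative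
`(R t)ᴴ * ((F t)ᴴ * j + j * F t) * R t`, which is `≤ 0` in the Loewner order because congruence
preserves semidefiniteness. A Hermitian matrix function with Loewner-nonpositive derivative is
Loewner-antitone: for each vector `v` the real function `re (star v ⬝ᵥ Q t *ᵥ v)` is antitone by
the mean value theorem. Hence `Q t ≤ Q 0 = j`.
-/

open Matrix
open scoped ComplexOrder

attribute [local instance] Matrix.normedAddCommGroup Matrix.normedSpace

section

variable {l m n 𝕜 : Type*} [RCLike 𝕜] {x : ℝ}

theorem HasDerivAt.matrix_apply [Fintype n] {A : ℝ → Matrix m n 𝕜} {A' : Matrix m n 𝕜}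
    (hA : HasDerivAt A A' x) (i : m) (k : n) : HasDerivAt (fun y => A y i k) (A' i k) x :=
  hasDerivAt_pi.mp (hasDerivAt_pi.mp hA i) k

theorem HasDerivAt.matrix_mul_s5 [Fintype m] [Fintype n] {A : ℝ → Matrix l m 𝕜}
    {B : ℝ → Matrix m n 𝕜} {A' : Matrix l m 𝕜} {B' : Matrix m n 𝕜}
    (hA : HasDerivAt A A' x) (hB : HasDerivAt B B' x) :
    HasDerivAt (fun y => A y * B y) (A' * B x + A x * B') x := by
  refine hasDerivAt_pi.mpr fun i => hasDerivAt_pi.mpr fun k => ?_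
  simp only [Matrix.add_apply, mul_apply, ← Finset.sum_add_distrib]
  exact HasDerivAt.fun_sum fun r _ => (hA.matrix_apply i r).fun_mul (hB.matrix_apply r k)

theorem HasDerivAt.matrix_conjTranspose [Fintype m] [Fintype n] {A : ℝ → Matrix m n 𝕜}
    {A' : Matrix m n 𝕜} (hA : HasDerivAt A A' x) : HasDerivAt (fun y => (A y)ᴴ) A'ᴴ x :=
  hasDerivAt_pi.mpr fun i => hasDerivAt_pi.mpr fun k => (hA.matrix_apply k i).star

theorem HasDerivWithinAt.re_star_dotProduct_mulVec [Fintype n] {Q : ℝ → Matrix n n 𝕜}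
    {Q' : Matrix n n 𝕜} {s : Set ℝ} (hQ : HasDerivWithinAt Q Q' s x) (v : n → 𝕜) :
    HasDerivWithinAt (fun y => RCLike.re (star v ⬝ᵥ Q y *ᵥ v))
      (RCLike.re (star v ⬝ᵥ Q' *ᵥ v)) s x := by
  let ℓ : Matrix n n 𝕜 →ₗ[ℝ] ℝ :=
    { toFun := fun A => RCLike.re (star v ⬝ᵥ A *ᵥ v)
      map_add' := fun A B => by simp only [add_mulVec, dotProduct_add, map_add]
      map_smul' := fun c A => by
        simp only [smul_mulVec, dotProduct_smul, RCLike.smul_re, RingHom.id_apply, smul_eq_mul] }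
  exact (LinearMap.toContinuousLinearMap ℓ).hasFDerivAt.comp_hasDerivWithinAt x hQ

theorem Matrix.IsHermitian.posSemidef_of_re_dotProduct_mulVec_nonneg [Fintype n]
    {A : Matrix n n 𝕜} (hA : A.IsHermitian) (h : ∀ v, 0 ≤ RCLike.re (star v ⬝ᵥ A *ᵥ v)) :
    A.PosSemidef :=
  .of_dotProduct_mulVec_nonneg hA fun v =>
    RCLike.nonneg_iff.mpr ⟨h v, hA.im_star_dotProduct_mulVec_self v⟩

open scoped MatrixOrder in
theorem Matrix.antitoneOn_of_hasDerivWithinAt_neg_posSemidef [Fintype n]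
    {Q Q' : ℝ → Matrix n n 𝕜} {D : Set ℝ} (hD : Convex ℝ D) (hQh : ∀ y ∈ D, (Q y).IsHermitian)
    (hQc : ContinuousOn Q D)
    (hQ : ∀ y ∈ interior D, HasDerivWithinAt Q (Q' y) (interior D) y)
    (hQ' : ∀ y ∈ interior D, (-Q' y).PosSemidef) : AntitoneOn Q D := by
  intro a ha b hb hab
  rw [Matrix.le_iff]
  refine ((hQh a ha).sub (hQh b hb)).posSemidef_of_re_dotProduct_mulVec_nonneg fun v => ?_
  have hanti : AntitoneOn (fun y => RCLike.re (star v ⬝ᵥ Q y *ᵥ v)) D :=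
    antitoneOn_of_hasDerivWithinAt_nonpos hD (by fun_prop)
      (fun y hy => (hQ y hy).re_star_dotProduct_mulVec v)
      fun y hy => by simpa [neg_mulVec] using (hQ' y hy).re_dotProduct_nonneg v
  simpa [sub_mulVec] using hanti ha hb hab

end

theorem j_contractive_evolution_general (m : ℕ)
    (j : Matrix (Fin m) (Fin m) ℂ) (hj : jᴴ = j)
    (F R : ℝ → Matrix (Fin m) (Fin m) ℂ)
    (hFdiss : ∀ t : ℝ, 0 ≤ t → (-((F t)ᴴ * j + j * F t)).PosSemidef)
    (hR : ∀ t : ℝ, HasDerivAt R (F t * R t) t)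
    (hR0 : R 0 = 1) :
    ∀ t : ℝ, 0 ≤ t → (j - (R t)ᴴ * j * (R t)).PosSemidef := by
  have hQ (s : ℝ) : HasDerivAt (fun s => (R s)ᴴ * j * R s)
      ((R s)ᴴ * ((F s)ᴴ * j + j * F s) * R s) s := by
    convert ((hR s).matrix_conjTranspose.matrix_mul_s5 (hasDerivAt_const s j)).matrix_mul_s5 (hR s)
      using 1
    simp only [conjTranspose_mul, Matrix.mul_add, Matrix.add_mul, Matrix.mul_assoc,
      Matrix.mul_zero, add_zero]
  have hanti := Matrix.antitoneOn_of_hasDerivWithinAt_neg_posSemidef (convex_Ici 0)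
    (fun s _ => isHermitian_conjTranspose_mul_mul (R s) hj)
    (fun s _ => (hQ s).continuousAt.continuousWithinAt) (fun s _ => (hQ s).hasDerivWithinAt)
    fun s hs => by
      simpa only [Matrix.neg_mul, Matrix.mul_neg] using
        (hFdiss s (interior_subset hs)).conjTranspose_mul_mul_same (R s)
  intro t ht
  simpa [hR0, Matrix.le_iff] using hanti Set.self_mem_Ici ht ht

/-- If `j` is a Hermitian involution, `F(t)* j + j F(t) ≤ 0` for `t ≥ 0`, and
`R' = F R`, `R(0) = I`, then `R(t)* j R(t) ≤ j` for all `t ≥ 0`. -/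
theorem j_contractive_evolution (m : ℕ)
    (j : Matrix (Fin m) (Fin m) ℂ) (hj : jᴴ = j) (hj2 : j * j = 1)
    (F R : ℝ → Matrix (Fin m) (Fin m) ℂ)
    (hFc : Continuous F)
    (hFdiss : ∀ t : ℝ, 0 ≤ t → (-((F t)ᴴ * j + j * F t)).PosSemidef)
    (hR : ∀ t : ℝ, HasDerivAt R (F t * R t) t)
    (hR0 : R 0 = 1) :
    ∀ t : ℝ, 0 ≤ t → (j - (R t)ᴴ * j * (R t)).PosSemidef :=
  j_contractive_evolution_general m j hj F R hFdiss hR hR0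
end

section
/- Let A₁, A₂ be n × n complex matrices, S an invertible n × n matrix, and Π₁, Π₂ n × m matrices satisfying A₁S - SA₂ = Π₁Π₂*. For z not in the spectrum of A₁ nor of A₂, define w_A(z) = I_m - Π₂* S⁻¹ (A₁ - zI)⁻¹ Π₁ and u(z) = I_m + Π₂* (A₂ - zI)⁻¹ S⁻¹ Π₁. Then w_A(z)·u(z) = I_m and u(z)·w_A(z) = I_m; in particular w_A(z) is invertible with inverse u(z). -/
/-!
With `X = (A₁ - z)S` and `Y = S(A₂ - z)` one has `w_A(z) = 1 - Π₂* X⁻¹ Π₁` and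
`u(z) = 1 + Π₂* Y⁻¹ Π₁`, while the node identity says `X - Y = Π₁Π₂*`. The resolvent-type identity
`Y⁻¹ - X⁻¹ = Y⁻¹(X - Y)X⁻¹` then makes the cross terms of `u(z) w_A(z)` cancel.
-/

open Matrix

theorem isUnit_sub_smul_one_of_notMem_spectrum {R A : Type*} [CommSemiring R] [Ring A]
    [Algebra R A] {r : R} {a : A} (h : r ∉ spectrum R a) : IsUnit (a - r • 1) := by
  simpa [neg_sub, Algebra.algebraMap_eq_smul_one] using (spectrum.notMem_iff.mp h).neg

theorem sub_smul_one_mul_sub_mul_sub_smul_one {R A : Type*} [CommSemiring R] [Ring A]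
    [Algebra R A] (r : R) (a b s : A) :
    (a - r • 1) * s - s * (b - r • 1) = a * s - s * b := by
  simp only [sub_mul, mul_sub, smul_one_mul, mul_smul_one]
  abel

namespace Matrix

variable {n m α : Type*} [Fintype n] [DecidableEq n] [Fintype m] [DecidableEq m] [CommRing α]

theorem one_add_mul_inv_mul_mul_one_sub_mul_inv_mul {X Y : Matrix n n α} {P : Matrix n m α}
    {Q : Matrix m n α} (hXY : IsUnit X ↔ IsUnit Y) (h : X - Y = P * Q) :
    (1 + Q * Y⁻¹ * P) * (1 - Q * X⁻¹ * P) = 1 := by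
  have resolvent : Y⁻¹ - X⁻¹ = Y⁻¹ * (P * Q) * X⁻¹ := by
    rw [← h, inv_sub_inv hXY.symm]
  calc (1 + Q * Y⁻¹ * P) * (1 - Q * X⁻¹ * P)
      = 1 + Q * (Y⁻¹ - X⁻¹ - Y⁻¹ * (P * Q) * X⁻¹) * P := by
        simp only [Matrix.add_mul, Matrix.mul_sub, Matrix.sub_mul, Matrix.one_mul,
          Matrix.mul_one, Matrix.mul_assoc]
        abel
    _ = 1 := by rw [resolvent, sub_self, Matrix.mul_zero, Matrix.zero_mul, add_zero]

end Matrix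

/-- Explicit inverse of the transfer matrix function: if `A₁S - SA₂ = Pi1Pi2*`, `S` is
invertible and `z ∉ σ(A₁) ∪ σ(A₂)`, then
`w_A(z) = I - Pi2* S⁻¹ (A₁ - zI)⁻¹ Pi1` is invertible with inverse
`u(z) = I + Pi2* (A₂ - zI)⁻¹ S⁻¹ Pi1`. -/
theorem transfer_matrix_inverse (n m : ℕ)
    (A₁ A₂ S : Matrix (Fin n) (Fin n) ℂ)
    (Pi1 Pi2 : Matrix (Fin n) (Fin m) ℂ)
    (hS : IsUnit S)
    (hnode : A₁ * S - S * A₂ = Pi1 * Pi2ᴴ)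
    (z : ℂ)
    (hz₁ : z ∉ spectrum ℂ A₁)
    (hz₂ : z ∉ spectrum ℂ A₂)
    (wA u : Matrix (Fin m) (Fin m) ℂ)
    (hwA : wA = 1 - Pi2ᴴ * S⁻¹ * (A₁ - z • 1)⁻¹ * Pi1)
    (hu : u = 1 + Pi2ᴴ * (A₂ - z • 1)⁻¹ * S⁻¹ * Pi1) :
    wA * u = 1 ∧ u * wA = 1 ∧ wA⁻¹ = u := by
  have hX : IsUnit ((A₁ - z • 1) * S) := (isUnit_sub_smul_one_of_notMem_spectrum hz₁).mul hS
  have hY : IsUnit (S * (A₂ - z • 1)) := hS.mul (isUnit_sub_smul_one_of_notMem_spectrum hz₂)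
  have hnode_shifted : (A₁ - z • 1) * S - S * (A₂ - z • 1) = Pi1 * Pi2ᴴ := by
    rw [sub_smul_one_mul_sub_mul_sub_smul_one, hnode]
  have huw : u * wA = 1 := by
    rw [hu, hwA]
    simpa only [Matrix.mul_inv_rev, ← Matrix.mul_assoc] using
      one_add_mul_inv_mul_mul_one_sub_mul_inv_mul (iff_of_true hX hY) hnode_shifted
  exact ⟨mul_eq_one_comm.mp huw, huw, inv_eq_left_inv huw⟩
end
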